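/- arXiv:2002.10925 — 3 statements merged into one kernel-verified Lean document; each statement's English description precedes it below -/
import Mathlib

section
/- Let k, s be positive integers. For each i = 1,…,k let d^i = (d^i_1,…,d^i_s) and t^i = (t^i_1,…,t^i_s) be partitions of nonnegative integers with d^i_j ≥ t^i_j for all j = 1,…,s and i = 1,…,k. Let A = (A_1,…,A_s) and B = (B_1,…,B_s) be partitions of nonnegative integers such that (d^1 − t^1) ∪ (d^2 − t^2) ∪ ⋯ ∪ (d^k − t^k) ≺ A + B. Then there exist partitions f^i = (f^i_1,…,f^i_s), i = 1,…,k, of nonnegative integers such that: (1) d^i_j ≥ f^i_j ≥ t^i_j for all i = 1,…,k and all j; (2) (f^1 − t^1) ∪ (f^2 − t^2) ∪ ⋯ ∪ (f^k − t^k) ≺ A; and (3) (d^1 − f^1) ∪ (d^2 − f^2) ∪ ⋯ ∪ (d^k − f^k) ≺ B. -/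
/-- The sum of the `j` largest entries of a multiset of nonnegative integers
(realized as the maximum of the sums of submultisets with at most `j` elements). -/
def kMaxSum (M : Multiset ℕ) (j : ℕ) : ℕ :=
  ((M.powerset.filter (fun T => Multiset.card T ≤ j)).map Multiset.sum).sup

/-- Classical majorization of (the decreasing rearrangements of) two multisets of
nonnegative integers: equal total sums, and for every `j` the sum of the `j` largest
entries of `M` is at most the sum of the `j` largest entries of `N`. -/
def Majorized (M N : Multiset ℕ) : Prop :=
  M.sum = N.sum ∧ ∀ j, kMaxSum M j ≤ kMaxSum N j

/-- The multiset of entries of a finite tuple. -/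
def tupleMul {s : ℕ} (a : Fin s → ℕ) : Multiset ℕ := Multiset.map a Finset.univ.val

/-!
Let `m` be the multiset of all entries of the `dⁱ - tⁱ` and read `A + B` as the multiset of sums of
the pairs `(A_j, B_j)`. By the discrete Hardy–Littlewood–Pólya theorem, once both sides are padded
with zeros, `m ≺ A + B` lets one reach `m` from `A + B` by transfers, each moving one unit from an
entry to an entry smaller by at least two. A transfer between the sums of two pairs can be carried
out inside a coordinate in which the donor pair is the larger one, where it again evens out two
entries; following the chain splits `m` entrywise as `x + y` with `x ≺ A` and `y ≺ B`, and
`fⁱ = tⁱ + xⁱ` satisfies everything except monotonicity of its rows. Swapping two entries of a row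
that are out of order keeps `t ≤ f ≤ d`, because `t` and `d` are non-increasing, and evens out two
entries of both `f - t` and `d - f`; so sorting the rows preserves both majorizations.
-/
open Multiset

theorem Multiset.sup_mem_of_ne_zero {α : Type*} [LinearOrder α] [OrderBot α] {M : Multiset α}
    (hM : M ≠ 0) : M.sup ∈ M := by
  induction M using Multiset.induction with
  | empty => exact absurd rfl hM
  | cons a N ih =>
    rcases eq_or_ne N 0 with rfl | hN
    · simp
    rw [sup_cons]
    rcases le_total a N.sup with h | h
    · rw [sup_eq_right.2 h]
      exact mem_cons_of_mem (ih hN)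
    · rw [sup_eq_left.2 h]
      exact mem_cons_self a N

theorem Multiset.exists_eq_cons_sup {α : Type*} [LinearOrder α] [OrderBot α] {M : Multiset α}
    (hM : M ≠ 0) :
    ∃ N, M = M.sup ::ₘ N ∧ ∀ x ∈ N, x ≤ M.sup := by
  obtain ⟨N, hN⟩ := exists_cons_of_mem (sup_mem_of_ne_zero hM)
  exact ⟨N, hN, fun x hx => le_sup (hN ▸ mem_cons_of_mem hx)⟩

section KMaxSum

variable {M N : Multiset ℕ} {a j : ℕ}

theorem le_kMaxSum {T : Multiset ℕ} (hT : T ≤ M) (hc : card T ≤ j) : T.sum ≤ kMaxSum M j :=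
  le_sup (mem_map.2 ⟨T, mem_filter.2 ⟨mem_powerset.2 hT, hc⟩, rfl⟩)

theorem kMaxSum_le {n : ℕ} (h : ∀ T ≤ M, card T ≤ j → T.sum ≤ n) : kMaxSum M j ≤ n := by
  simp only [kMaxSum, Multiset.sup_le, mem_map, mem_filter, mem_powerset]
  rintro _ ⟨T, ⟨hT, hc⟩, rfl⟩
  exact h T hT hc

theorem exists_sum_eq_kMaxSum (M : Multiset ℕ) (j : ℕ) :
    ∃ T ≤ M, card T ≤ j ∧ T.sum = kMaxSum M j := by
  have hne : (M.powerset.filter fun T => card T ≤ j).map sum ≠ 0 := by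
    have := mem_map_of_mem sum
      ((mem_filter (p := fun T => card T ≤ j)).2 ⟨mem_powerset.2 (zero_le M), Nat.zero_le j⟩)
    rintro h
    simp [h] at this
  obtain ⟨T, hT, hsum⟩ := mem_map.1 (sup_mem_of_ne_zero hne)
  obtain ⟨hTM, hc⟩ := mem_filter.1 hT
  exact ⟨T, mem_powerset.1 hTM, hc, hsum⟩

@[simp]
theorem kMaxSum_zero_right (M : Multiset ℕ) : kMaxSum M 0 = 0 :=
  Nat.eq_zero_of_le_zero <| kMaxSum_le fun T _ hc => by simp [card_eq_zero.1 (Nat.le_zero.1 hc)]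

theorem kMaxSum_mono_right (M : Multiset ℕ) : Monotone (kMaxSum M) := fun _ _ hj => by
  obtain ⟨T, hT, hc, hsum⟩ := exists_sum_eq_kMaxSum M _
  exact hsum ▸ le_kMaxSum hT (hc.trans hj)

theorem kMaxSum_mono_left (h : M ≤ N) (j : ℕ) : kMaxSum M j ≤ kMaxSum N j := by
  obtain ⟨T, hT, hc, hsum⟩ := exists_sum_eq_kMaxSum M j
  exact hsum ▸ le_kMaxSum (hT.trans h) hc

theorem kMaxSum_of_card_le (h : card M ≤ j) : kMaxSum M j = M.sum :=
  le_antisymm (kMaxSum_le fun _ hT _ => by obtain ⟨U, rfl⟩ := _root_.le_iff_exists_add.1 hT; simp)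
    (le_kMaxSum le_rfl h)

theorem kMaxSum_cons_succ (a : ℕ) (N : Multiset ℕ) (j : ℕ) :
    kMaxSum (a ::ₘ N) (j + 1) = max (kMaxSum N (j + 1)) (a + kMaxSum N j) := by
  apply le_antisymm
  · apply kMaxSum_le
    intro T hT hc
    by_cases ha : a ∈ T
    · obtain ⟨T', rfl⟩ := exists_cons_of_mem ha
      rw [sum_cons]
      refine le_max_of_le_right (Nat.add_le_add_left (le_kMaxSum ((cons_le_cons_iff a).1 hT) ?_) a)
      simpa using hc
    · exact le_max_of_le_left (le_kMaxSum ((le_cons_of_notMem ha).1 hT) hc)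
  · refine max_le (kMaxSum_mono_left (le_cons_self N a) _) ?_
    obtain ⟨T, hT, hc, hsum⟩ := exists_sum_eq_kMaxSum N j
    rw [← hsum, ← sum_cons]
    exact le_kMaxSum (cons_le_cons a hT) (by simpa using hc)

theorem kMaxSum_succ_le_of_forall_le (h : ∀ x ∈ N, x ≤ a) (j : ℕ) :
    kMaxSum N (j + 1) ≤ a + kMaxSum N j := by
  apply kMaxSum_le
  intro T hT hc
  rcases empty_or_exists_mem T with rfl | ⟨x, hx⟩
  · simp
  obtain ⟨T', rfl⟩ := exists_cons_of_mem hx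
  rw [sum_cons]
  exact Nat.add_le_add (h x (mem_of_le hT hx))
    (le_kMaxSum ((le_cons_self T' x).trans hT) (by simpa using hc))

theorem kMaxSum_cons_succ_of_forall_le (h : ∀ x ∈ N, x ≤ a) (j : ℕ) :
    kMaxSum (a ::ₘ N) (j + 1) = a + kMaxSum N j := by
  rw [kMaxSum_cons_succ]
  exact max_eq_right (kMaxSum_succ_le_of_forall_le h j)

theorem kMaxSum_zero_left (j : ℕ) : kMaxSum 0 j = 0 :=
  kMaxSum_of_card_le (by simp)

theorem kMaxSum_concave (M : Multiset ℕ) (j : ℕ) :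
    kMaxSum M (j + 2) + kMaxSum M j ≤ 2 * kMaxSum M (j + 1) := by
  induction M using Multiset.strongInductionOn generalizing j with
  | ih M ih =>
    rcases eq_or_ne M 0 with rfl | hM
    · simp [kMaxSum_zero_left]
    obtain ⟨N, hMN, hmax⟩ := exists_eq_cons_sup hM
    rw [hMN, kMaxSum_cons_succ_of_forall_le hmax, kMaxSum_cons_succ_of_forall_le hmax]
    cases j with
    | zero =>
      have := kMaxSum_succ_le_of_forall_le hmax 0
      simp only [kMaxSum_zero_right] at this ⊢
      omega
    | succ j =>
      have := ih N (hMN ▸ lt_cons_self N _) j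
      rw [kMaxSum_cons_succ_of_forall_le hmax]
      simp only [show j + 1 + 1 = j + 2 from rfl] at *
      omega

/-- The `(j+1)`-st largest entry of `M`, counted with multiplicity (`0` once `card M ≤ j`). -/
def nthLargest (M : Multiset ℕ) (j : ℕ) : ℕ := kMaxSum M (j + 1) - kMaxSum M j

theorem kMaxSum_succ (M : Multiset ℕ) (j : ℕ) :
    kMaxSum M (j + 1) = kMaxSum M j + nthLargest M j :=
  (Nat.add_sub_cancel' (kMaxSum_mono_right M j.le_succ)).symm

theorem sum_range_nthLargest (M : Multiset ℕ) (j : ℕ) :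
    ∑ i ∈ Finset.range j, nthLargest M i = kMaxSum M j := by
  induction j with
  | zero => simp
  | succ j ih => rw [Finset.sum_range_succ, ih, kMaxSum_succ]

theorem nthLargest_antitone (M : Multiset ℕ) : Antitone (nthLargest M) :=
  antitone_nat_of_succ_le fun j => by
    have := kMaxSum_concave M j
    have := kMaxSum_succ M j
    have : kMaxSum M (j + 2) = kMaxSum M (j + 1) + nthLargest M (j + 1) := kMaxSum_succ M (j + 1)
    omega

theorem nthLargest_cons_zero (h : ∀ x ∈ N, x ≤ a) : nthLargest (a ::ₘ N) 0 = a := by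
  simp [nthLargest, kMaxSum_cons_succ_of_forall_le h]

theorem nthLargest_cons_succ (h : ∀ x ∈ N, x ≤ a) (j : ℕ) :
    nthLargest (a ::ₘ N) (j + 1) = nthLargest N j := by
  simp only [nthLargest, kMaxSum_cons_succ_of_forall_le h]
  omega

theorem map_range_card_nthLargest (M : Multiset ℕ) :
    (range (card M)).map (nthLargest M) = M := by
  induction M using Multiset.strongInductionOn with
  | ih M ih =>
    rcases eq_or_ne M 0 with rfl | hM
    · simp
    obtain ⟨N, hMN, hmax⟩ := exists_eq_cons_sup hM
    have hN := ih N (hMN ▸ lt_cons_self N _)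
    rw [hMN, card_cons, add_comm, range_add, map_add, map_map]
    have h0 : (range 1).map (nthLargest (M.sup ::ₘ N)) = {M.sup} := by
      simp [range_succ, nthLargest_cons_zero hmax]
    rw [h0, singleton_add]
    congr 1
    conv_rhs => rw [← hN]
    exact map_congr rfl fun i _ => by rw [Function.comp_apply, add_comm, nthLargest_cons_succ hmax]

theorem eq_of_kMaxSum_eq (hc : card M = card N) (h : ∀ j, kMaxSum M j = kMaxSum N j) :
    M = N := by
  have : nthLargest M = nthLargest N := funext fun j => by simp only [nthLargest, h]
  rw [← map_range_card_nthLargest M, ← map_range_card_nthLargest N, hc, this]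

theorem kMaxSum_cons_zero (M : Multiset ℕ) (j : ℕ) : kMaxSum (0 ::ₘ M) j = kMaxSum M j := by
  cases j with
  | zero => simp
  | succ j =>
    rw [kMaxSum_cons_succ, zero_add]
    exact max_eq_left (kMaxSum_mono_right M j.le_succ)

theorem kMaxSum_add_replicate_zero (M : Multiset ℕ) (n j : ℕ) :
    kMaxSum (M + replicate n 0) j = kMaxSum M j := by
  induction n with
  | zero => simp
  | succ n ih => rw [replicate_succ, add_cons, kMaxSum_cons_zero, ih]

theorem kMaxSum_cons_cons_one (x y : ℕ) (R : Multiset ℕ) :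
    kMaxSum (x ::ₘ y ::ₘ R) 1 = max (kMaxSum R 1) (max x y) := by
  rw [kMaxSum_cons_succ x _ 0, kMaxSum_cons_succ y R 0]
  simp only [zero_add, kMaxSum_zero_right]
  omega

theorem kMaxSum_cons_cons_add_two (x y : ℕ) (R : Multiset ℕ) (j : ℕ) :
    kMaxSum (x ::ₘ y ::ₘ R) (j + 2) =
      max (kMaxSum R (j + 2)) (max (max x y + kMaxSum R (j + 1)) (x + y + kMaxSum R j)) := by
  rw [kMaxSum_cons_succ x _ (j + 1), kMaxSum_cons_succ y R (j + 1), kMaxSum_cons_succ y R j]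
  simp only [show j + 1 + 1 = j + 2 from rfl]
  omega

end KMaxSum

theorem add_kMaxSum_le_kMaxSum_add (X Y : Multiset ℕ) (a b : ℕ) :
    kMaxSum X a + kMaxSum Y b ≤ kMaxSum (X + Y) (a + b) := by
  obtain ⟨T, hT, hTc, hTs⟩ := exists_sum_eq_kMaxSum X a
  obtain ⟨U, hU, hUc, hUs⟩ := exists_sum_eq_kMaxSum Y b
  rw [← hTs, ← hUs, ← sum_add]
  exact le_kMaxSum (add_le_add hT hU) (by rw [card_add]; omega)

namespace Majorized

variable {L M N X X' Y Y' : Multiset ℕ}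

theorem refl (M : Multiset ℕ) : Majorized M M := ⟨rfl, fun _ => le_rfl⟩

theorem trans (h₁ : Majorized L M) (h₂ : Majorized M N) : Majorized L N :=
  ⟨h₁.1.trans h₂.1, fun j => (h₁.2 j).trans (h₂.2 j)⟩

theorem add (hX : Majorized X X') (hY : Majorized Y Y') : Majorized (X + Y) (X' + Y') := by
  refine ⟨by rw [sum_add, sum_add, hX.1, hY.1], fun j => kMaxSum_le fun T hT hc => ?_⟩
  have hTY : T - X ≤ Y := Multiset.sub_le_iff_le_add.2 (by rwa [add_comm])
  calc T.sum = (T - X).sum + (T ∩ X).sum := by rw [← sum_add, sub_add_inter]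
    _ ≤ kMaxSum Y (card (T - X)) + kMaxSum X (card (T ∩ X)) :=
      add_le_add (le_kMaxSum hTY le_rfl) (le_kMaxSum inter_le_right le_rfl)
    _ ≤ kMaxSum Y' (card (T - X)) + kMaxSum X' (card (T ∩ X)) := add_le_add (hY.2 _) (hX.2 _)
    _ ≤ kMaxSum (Y' + X') (card (T - X) + card (T ∩ X)) := add_kMaxSum_le_kMaxSum_add _ _ _ _
    _ ≤ kMaxSum (X' + Y') j := by
      rw [add_comm Y', ← card_add, sub_add_inter]
      exact kMaxSum_mono_right _ hc

theorem sum {ι : Type*} (s : Finset ι) {X Y : ι → Multiset ℕ}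
    (h : ∀ i ∈ s, Majorized (X i) (Y i)) : Majorized (∑ i ∈ s, X i) (∑ i ∈ s, Y i) := by
  induction s using Finset.cons_induction with
  | empty => exact refl 0
  | cons a s ha ih =>
    rw [Finset.sum_cons, Finset.sum_cons]
    exact (h a (Finset.mem_cons_self a s)).add (ih fun i hi => h i (Finset.mem_cons_of_mem hi))

end Majorized

@[simp]
theorem majorized_add_replicate_zero_left {M N : Multiset ℕ} {n : ℕ} :
    Majorized (M + replicate n 0) N ↔ Majorized M N := by
  simp [Majorized, kMaxSum_add_replicate_zero]

@[simp]
theorem majorized_add_replicate_zero_right {M N : Multiset ℕ} {n : ℕ} :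
    Majorized M (N + replicate n 0) ↔ Majorized M N := by
  simp [Majorized, kMaxSum_add_replicate_zero]

theorem majorized_cons_cons {a b a' b' : ℕ} (hsum : a' + b' = a + b) (ha : a' ≤ max a b)
    (hb : b' ≤ max a b) (R : Multiset ℕ) : Majorized (a' ::ₘ b' ::ₘ R) (a ::ₘ b ::ₘ R) := by
  refine ⟨by simp only [sum_cons]; omega, fun j => ?_⟩
  match j with
  | 0 => simp
  | 1 =>
    rw [kMaxSum_cons_cons_one, kMaxSum_cons_cons_one]
    omega
  | j + 2 =>
    rw [kMaxSum_cons_cons_add_two, kMaxSum_cons_cons_add_two]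
    omega

theorem Finset.exists_map_val_eq_cons_cons {ι β : Type*} {s : Finset ι} {a b : ι} (ha : a ∈ s)
    (hb : b ∈ s) (hab : a ≠ b) {f g : ι → β} (hfg : ∀ i ∈ s, i ≠ a → i ≠ b → f i = g i) :
    ∃ R, s.val.map f = f a ::ₘ f b ::ₘ R ∧ s.val.map g = g a ::ₘ g b ::ₘ R := by
  classical
  have hs : s.val = a ::ₘ b ::ₘ (s.val.erase a).erase b := by
    rw [Multiset.cons_erase ((s.nodup.mem_erase_iff).2 ⟨hab.symm, hb⟩), Multiset.cons_erase ha]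
  refine ⟨((s.val.erase a).erase b).map f, ?_, ?_⟩ <;> conv_lhs => rw [hs]
  · rw [Multiset.map_cons, Multiset.map_cons]
  rw [Multiset.map_cons, Multiset.map_cons, map_congr rfl fun i hi => ?_]
  rw [(s.nodup.erase a).mem_erase_iff, s.nodup.mem_erase_iff] at hi
  exact (hfg i hi.2.2 hi.2.1 hi.1).symm

theorem sum_range_le_kMaxSum {n j : ℕ} (hj : j ≤ n) (f : ℕ → ℕ) :
    ∑ i ∈ Finset.range j, f i ≤ kMaxSum ((Finset.range n).val.map f) j :=
  le_kMaxSum (map_le_map (Finset.val_le_iff.2 (Finset.range_subset_range.2 hj))) (by simp)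

def Transfer (C C' : Multiset ℕ) : Prop :=
  ∃ u v E, v + 1 ≤ u ∧ C = (u + 1) ::ₘ v ::ₘ E ∧ C' = u ::ₘ (v + 1) ::ₘ E

namespace Transfer

variable {C C' : Multiset ℕ}

theorem majorized (h : Transfer C C') : Majorized C' C := by
  obtain ⟨u, v, E, huv, rfl, rfl⟩ := h
  exact majorized_cons_cons (by omega) (by omega) (by omega) E

theorem card_eq (h : Transfer C C') : card C' = card C := by
  obtain ⟨u, v, E, -, rfl, rfl⟩ := h
  simp

theorem sum_sq_lt (h : Transfer C C') : (C'.map (· ^ 2)).sum < (C.map (· ^ 2)).sum := by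
  obtain ⟨u, v, E, huv, rfl, rfl⟩ := h
  simp only [map_cons, sum_cons]
  nlinarith

end Transfer

section TransferExistence

variable {M C : Multiset ℕ}

/-- The transfer moves one unit from the `(jj+1)`-st to the `(rr+1)`-st largest entry of `C`:
the partial sums of `C` then drop by one exactly on `(jj, rr]`, where those of `M` are strictly
smaller. -/
theorem exists_transfer_of_strict_run {jj rr : ℕ} (hjr : jj < rr) (hrn : rr < card C)
    (hc : card M = card C) (h : Majorized M C) (hlo : kMaxSum M jj = kMaxSum C jj)
    (hrun : ∀ i, jj < i → i ≤ rr → kMaxSum M i < kMaxSum C i)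
    (hhi : kMaxSum M (rr + 1) = kMaxSum C (rr + 1)) :
    ∃ C', Transfer C C' ∧ Majorized M C' := by
  set n := card C
  have hgap : nthLargest C rr + 2 ≤ nthLargest C jj := by
    have := hrun (jj + 1) (by omega) (by omega)
    have := hrun rr hjr le_rfl
    have := nthLargest_antitone M hjr.le
    have := kMaxSum_succ M jj
    have := kMaxSum_succ C jj
    have := kMaxSum_succ M rr
    have := kMaxSum_succ C rr
    omega
  set c' : ℕ → ℕ := fun i =>
    if i = jj then nthLargest C i - 1 else if i = rr then nthLargest C i + 1 else nthLargest C i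
  have hc' : ∀ i,
      c' i + (if i = jj then 1 else 0) = nthLargest C i + (if i = rr then 1 else 0) := by
    intro i
    rcases eq_or_ne i jj with rfl | hij
    · simp only [c', hjr.ne, if_true, if_false]
      omega
    · by_cases hir : i = rr <;> simp [c', hij, hir, hjr.ne']
  obtain ⟨R, hC, hC'⟩ := Finset.exists_map_val_eq_cons_cons (s := Finset.range n)
    (Finset.mem_range.2 (hjr.trans hrn)) (Finset.mem_range.2 hrn) hjr.ne (f := nthLargest C)
    (g := c') fun i _ hjj hrr => by simp [c', hjj, hrr]
  have hCc : (Finset.range n).val.map (nthLargest C) = C := map_range_card_nthLargest C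
  have hT : Transfer C ((Finset.range n).val.map c') :=
    ⟨nthLargest C jj - 1, nthLargest C rr, R, by omega,
      hCc.symm.trans (hC.trans (by congr; omega)),
      by rw [hC']; simp [c', hjr.ne']⟩
  refine ⟨_, hT, h.1.trans hT.majorized.1.symm, fun j => ?_⟩
  rcases lt_or_ge n j with hnj | hjn
  · rw [kMaxSum_of_card_le (hc ▸ hnj.le), kMaxSum_of_card_le (by simpa using hnj.le),
      hT.majorized.1, h.1]
  have hsum := Finset.sum_congr rfl fun i (_ : i ∈ Finset.range j) => hc' i
  simp only [Finset.sum_add_distrib, Finset.sum_ite_eq', Finset.mem_range] at hsum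
  have hlow := sum_range_le_kMaxSum hjn c'
  have hCj := sum_range_nthLargest C j
  have hMj := h.2 j
  have hrunj := hrun j
  split_ifs at hsum <;> omega

theorem exists_transfer_of_majorized (hc : card M = card C) (h : Majorized M C) (hne : M ≠ C) :
    ∃ C', Transfer C C' ∧ Majorized M C' := by
  have hex : ∃ j, kMaxSum M j < kMaxSum C j := by
    by_contra! hno
    exact hne (eq_of_kMaxSum_eq hc fun j => le_antisymm (h.2 j) (hno j))
  have hhigh : kMaxSum M (card C) = kMaxSum C (card C) := by
    rw [kMaxSum_of_card_le hc.le, kMaxSum_of_card_le le_rfl, h.1]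
  have hjs := Nat.find_spec hex
  have hjs0 : Nat.find hex ≠ 0 := fun h0 => by simp [h0] at hjs
  have hjsn : Nat.find hex < card C := lt_of_not_ge fun hle => hjs.ne (by
    rw [kMaxSum_of_card_le (hc ▸ hle), kMaxSum_of_card_le hle, h.1])
  have hex2 : ∃ r, Nat.find hex < r ∧ kMaxSum M r = kMaxSum C r := ⟨card C, hjsn, hhigh⟩
  have hr := Nat.find_spec hex2
  have hrn : Nat.find hex2 ≤ card C := Nat.find_min' hex2 ⟨hjsn, hhigh⟩
  refine exists_transfer_of_strict_run (jj := Nat.find hex - 1) (rr := Nat.find hex2 - 1)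
    (by omega) (by omega) hc h ?_ (fun i hi hir => ?_)
    (by rw [Nat.sub_add_cancel (by omega)]; exact hr.2)
  · exact le_antisymm (h.2 _) (not_lt.1 (Nat.find_min hex (by omega)))
  · rcases eq_or_lt_of_le (show Nat.find hex ≤ i by omega) with rfl | hi'
    · exact hjs
    · exact lt_of_le_of_ne (h.2 i) fun heq => Nat.find_min hex2 (by omega) ⟨hi', heq⟩

end TransferExistence

theorem reflTransGen_transfer_of_majorized {M C : Multiset ℕ} (hc : card M = card C)
    (h : Majorized M C) : Relation.ReflTransGen Transfer C M := by
  induction hn : (C.map (· ^ 2)).sum using Nat.strong_induction_on generalizing C with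
  | _ n ih =>
    by_cases hMC : M = C
    · exact hMC ▸ .refl
    obtain ⟨C', hT, hC'⟩ := exists_transfer_of_majorized hc h hMC
    exact .head hT (ih _ (hn ▸ hT.sum_sq_lt) (hc.trans hT.card_eq.symm) hC' rfl)

section Lift

variable {N N' : Multiset ℕ} {Z : Multiset (ℕ × ℕ)}

theorem Transfer.exists_lift (h : Transfer N N') (hZ : Z.map (fun p => p.1 + p.2) = N) :
    ∃ Z' : Multiset (ℕ × ℕ), Z'.map (fun p => p.1 + p.2) = N' ∧
      Majorized (Z'.map Prod.fst) (Z.map Prod.fst) ∧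
      Majorized (Z'.map Prod.snd) (Z.map Prod.snd) := by
  classical
  obtain ⟨u, v, E, huv, rfl, rfl⟩ := h
  obtain ⟨p, hp, hpu, hZ1⟩ := (map_eq_cons _ _ _ _).2 hZ
  obtain ⟨q, hq, hqv, hZ2⟩ := (map_eq_cons _ _ _ _).2 hZ1
  set Z2 := (Z.erase p).erase q
  have hZ : Z = p ::ₘ q ::ₘ Z2 := by rw [cons_erase hq, cons_erase hp]
  rw [hZ]
  rcases (by omega : q.1 < p.1 ∨ q.2 < p.2) with h1 | h2
  · refine ⟨(p.1 - 1, p.2) ::ₘ (q.1 + 1, q.2) ::ₘ Z2, ?_, ?_, ?_⟩ <;> simp only [map_cons]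
    · rw [hZ2]
      congr 2 <;> omega
    · exact majorized_cons_cons (by omega) (by omega) (by omega) _
    · exact .refl _
  · refine ⟨(p.1, p.2 - 1) ::ₘ (q.1, q.2 + 1) ::ₘ Z2, ?_, ?_, ?_⟩ <;> simp only [map_cons]
    · rw [hZ2]
      congr 2 <;> omega
    · exact .refl _
    · exact majorized_cons_cons (by omega) (by omega) (by omega) _

theorem exists_lift_of_reflTransGen (h : Relation.ReflTransGen Transfer N N')
    (hZ : Z.map (fun p => p.1 + p.2) = N) :
    ∃ Z' : Multiset (ℕ × ℕ), Z'.map (fun p => p.1 + p.2) = N' ∧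
      Majorized (Z'.map Prod.fst) (Z.map Prod.fst) ∧
      Majorized (Z'.map Prod.snd) (Z.map Prod.snd) := by
  induction h with
  | refl => exact ⟨Z, hZ, .refl _, .refl _⟩
  | tail _ hT ih =>
    obtain ⟨Z₁, hZ₁, hfst₁, hsnd₁⟩ := ih
    obtain ⟨Z₂, hZ₂, hfst₂, hsnd₂⟩ := hT.exists_lift hZ₁
    exact ⟨Z₂, hZ₂, hfst₂.trans hfst₁, hsnd₂.trans hsnd₁⟩

end Lift

theorem exists_map_add_eq_of_majorized {M : Multiset ℕ} {Z : Multiset (ℕ × ℕ)}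
    (h : Majorized M (Z.map fun p => p.1 + p.2)) :
    ∃ Z' : Multiset (ℕ × ℕ), Z'.map (fun p => p.1 + p.2) = M + replicate (card Z) 0 ∧
      Majorized (Z'.map Prod.fst) (Z.map Prod.fst) ∧
      Majorized (Z'.map Prod.snd) (Z.map Prod.snd) := by
  set Zp := Z + replicate (card M) (0, 0)
  have hZp : Zp.map (fun p => p.1 + p.2) = Z.map (fun p => p.1 + p.2) + replicate (card M) 0 := by
    simp [Zp]
  have hchain := reflTransGen_transfer_of_majorized (M := M + replicate (card Z) 0)
    (C := Zp.map fun p => p.1 + p.2) (by simp [Zp]; omega) (by rw [hZp]; simpa using h)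
  obtain ⟨Z', hZ', hfst, hsnd⟩ := exists_lift_of_reflTransGen hchain rfl
  exact ⟨Z', hZ', by simpa [Zp] using hfst, by simpa [Zp] using hsnd⟩

theorem Multiset.exists_eq_map_add_of_map_eq {ι α β : Type*} [Nonempty α] (s : Finset ι)
    {f : α → β} {m : ι → β} {Z : Multiset α} {R : Multiset β} (h : Z.map f = s.val.map m + R) :
    ∃ (g : ι → α) (W : Multiset α), Z = s.val.map g + W ∧ W.map f = R ∧ ∀ i ∈ s, f (g i) = m i := by
  classical
  induction s using Finset.cons_induction generalizing Z with
  | empty => exact ⟨fun _ => Classical.arbitrary α, Z, by simp, by simpa using h, by simp⟩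
  | cons a s ha ih =>
    rw [Finset.cons_val, Multiset.map_cons, cons_add] at h
    obtain ⟨z, hz, hza, hZz⟩ := (map_eq_cons _ _ _ _).2 h
    obtain ⟨g, W, hZ, hW, hg⟩ := ih hZz
    have hgs : s.val.map (Function.update g a z) = s.val.map g :=
      map_congr rfl fun i hi => Function.update_of_ne (by rintro rfl; exact ha hi) _ _
    refine ⟨Function.update g a z, W, ?_, hW, ?_⟩
    · rw [Finset.cons_val, Multiset.map_cons, hgs, Function.update_self, cons_add, ← hZ,
        cons_erase hz]
    · intro i hi
      rcases Finset.mem_cons.1 hi with rfl | his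
      · simpa using hza
      · rw [Function.update_of_ne (by rintro rfl; exact ha his)]
        exact hg i his

theorem exists_split_of_majorized {ι : Type*} [Fintype ι] (m : ι → ℕ) (Z : Multiset (ℕ × ℕ))
    (h : Majorized (Finset.univ.val.map m) (Z.map fun p => p.1 + p.2)) :
    ∃ x ≤ m, Majorized (Finset.univ.val.map x) (Z.map Prod.fst) ∧
      Majorized (Finset.univ.val.map (m - x)) (Z.map Prod.snd) := by
  obtain ⟨Z', hZ', hfst, hsnd⟩ := exists_map_add_eq_of_majorized h
  obtain ⟨g, W, rfl, hW, hg⟩ := exists_eq_map_add_of_map_eq _ hZ'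
  have hW0 : W = replicate (card Z) (0, 0) := by
    refine eq_replicate.2 ⟨by simpa using congrArg card hW, fun w hw => ?_⟩
    have := eq_of_mem_replicate (hW ▸ mem_map_of_mem (fun p : ℕ × ℕ => p.1 + p.2) hw)
    ext <;> simp <;> omega
  subst hW0
  simp only [Multiset.map_add, map_replicate, majorized_add_replicate_zero_left, map_map]
    at hfst hsnd
  refine ⟨fun i => (g i).1, fun i => ?_, hfst, ?_⟩
  · have := hg i (Finset.mem_univ i)
    show (g i).1 ≤ m i
    omega
  · convert hsnd using 2 with i
    have := hg i (Finset.mem_univ i)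
    simp only [Pi.sub_apply, Function.comp_apply] at this ⊢
    omega

section Sorting

variable {s : ℕ} {t d f : Fin s → ℕ} {a b : Fin s}

theorem sum_mul_comp_swap_lt (hab : a < b) (hf : f a < f b) :
    ∑ l : Fin s, (l : ℕ) * f (Equiv.swap a b l) < ∑ l : Fin s, (l : ℕ) * f l := by
  have key : ∑ l : Fin s, (((l : ℕ) : ℤ) * f l - (l : ℕ) * f (Equiv.swap a b l)) =
      (((b : ℕ) : ℤ) - (a : ℕ)) * (f b - f a) := by
    rw [Fintype.sum_eq_add a b hab.ne fun l ⟨hla, hlb⟩ => by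
      simp [Equiv.swap_apply_of_ne_of_ne hla hlb]]
    simp only [Equiv.swap_apply_left, Equiv.swap_apply_right]
    ring
  have hpos : 0 < (((b : ℕ) : ℤ) - (a : ℕ)) * (f b - f a) :=
    mul_pos (by simpa using hab) (by simpa using hf)
  rw [Finset.sum_sub_distrib] at key
  exact_mod_cast (by omega : ∑ l : Fin s, ((l : ℕ) : ℤ) * f (Equiv.swap a b l) <
    ∑ l : Fin s, ((l : ℕ) : ℤ) * f l)

theorem comp_swap_mem_Icc (hab : a < b) (hf : f a < f b) (ht : Antitone t) (hd : Antitone d)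
    (htf : t ≤ f) (hfd : f ≤ d) : f ∘ Equiv.swap a b ∈ Set.Icc t d := by
  have := ht hab.le
  have := hd hab.le
  have : t a ≤ f a := htf a
  have : f b ≤ d b := hfd b
  have key : ∀ l, t l ≤ f (Equiv.swap a b l) ∧ f (Equiv.swap a b l) ≤ d l := by
    intro l
    rcases eq_or_ne l a with rfl | hla
    · rw [Equiv.swap_apply_left]
      omega
    rcases eq_or_ne l b with rfl | hlb
    · rw [Equiv.swap_apply_right]
      omega
    · rw [Equiv.swap_apply_of_ne_of_ne hla hlb]
      exact ⟨htf l, hfd l⟩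
  exact ⟨fun l => (key l).1, fun l => (key l).2⟩

theorem majorized_comp_swap (hab : a < b) (hf : f a < f b) (ht : Antitone t) (hd : Antitone d)
    (htf : t ≤ f) (hfd : f ≤ d) :
    Majorized (tupleMul (f ∘ Equiv.swap a b - t)) (tupleMul (f - t)) ∧
      Majorized (tupleMul (d - f ∘ Equiv.swap a b)) (tupleMul (d - f)) := by
  have := ht hab.le
  have := hd hab.le
  have : t a ≤ f a := htf a
  have : f b ≤ d b := hfd b
  have hoff : ∀ l ∈ Finset.univ, l ≠ a → l ≠ b → f l = (f ∘ Equiv.swap a b) l :=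
    fun l _ hla hlb => by simp [Equiv.swap_apply_of_ne_of_ne hla hlb]
  obtain ⟨R, hR, hR'⟩ := Finset.exists_map_val_eq_cons_cons (Finset.mem_univ a)
    (Finset.mem_univ b) hab.ne (f := f - t) (g := f ∘ Equiv.swap a b - t)
    fun l hl hla hlb => by simp only [Pi.sub_apply, hoff l hl hla hlb]
  obtain ⟨S, hS, hS'⟩ := Finset.exists_map_val_eq_cons_cons (Finset.mem_univ a)
    (Finset.mem_univ b) hab.ne (f := d - f) (g := d - f ∘ Equiv.swap a b)
    fun l hl hla hlb => by simp only [Pi.sub_apply, hoff l hl hla hlb]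
  unfold tupleMul
  rw [hR, hR', hS, hS']
  simp only [Pi.sub_apply, Function.comp_apply, Equiv.swap_apply_left, Equiv.swap_apply_right]
  exact ⟨majorized_cons_cons (by omega) (by omega) (by omega) R,
    majorized_cons_cons (by omega) (by omega) (by omega) S⟩

theorem exists_antitone_between (ht : Antitone t) (hd : Antitone d) (htf : t ≤ f)
    (hfd : f ≤ d) :
    ∃ g, Antitone g ∧ t ≤ g ∧ g ≤ d ∧ Majorized (tupleMul (g - t)) (tupleMul (f - t)) ∧
      Majorized (tupleMul (d - g)) (tupleMul (d - f)) := by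
  induction hn : ∑ l : Fin s, (l : ℕ) * f l using Nat.strong_induction_on generalizing f with
  | _ n ih =>
    by_cases hf : Antitone f
    · exact ⟨f, hf, htf, hfd, .refl _, .refl _⟩
    obtain ⟨a, b, hab, hlt⟩ : ∃ a b, a ≤ b ∧ f a < f b := by
      simpa [Antitone] using hf
    have hab : a < b := lt_of_le_of_ne hab fun h => (h ▸ hlt).false
    obtain ⟨htf', hfd'⟩ := comp_swap_mem_Icc hab hlt ht hd htf hfd
    obtain ⟨hmaj₁, hmaj₂⟩ := majorized_comp_swap hab hlt ht hd htf hfd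
    obtain ⟨g, hg, htg, hgd, hg₁, hg₂⟩ :=
      ih _ (hn ▸ sum_mul_comp_swap_lt hab hlt) htf' hfd' rfl
    exact ⟨g, hg, htg, hgd, hg₁.trans hmaj₁, hg₂.trans hmaj₂⟩

end Sorting

theorem sum_tupleMul {k s : ℕ} (h : Fin k → Fin s → ℕ) :
    ∑ i, tupleMul (h i) = Finset.univ.val.map fun p : Fin k × Fin s => h p.1 p.2 := by
  rw [← Finset.univ_product_univ, Finset.product_val]
  show _ = (Finset.univ.val.bind fun i => Finset.univ.val.map (Prod.mk i)).map _
  rw [Multiset.map_bind]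
  simp only [Multiset.map_map, Function.comp_def, Multiset.bind, Multiset.join,
    Finset.sum_eq_multiset_sum, tupleMul]

theorem stmt0_general (k s : ℕ)
    (d t : Fin k → Fin s → ℕ)
    (hd : ∀ i, Antitone (d i)) (ht : ∀ i, Antitone (t i))
    (hdt : ∀ i j, t i j ≤ d i j)
    (A B : Fin s → ℕ)
    (hmaj : Majorized (∑ i : Fin k, tupleMul (fun j => d i j - t i j))
            (tupleMul (fun j => A j + B j))) :
    ∃ f : Fin k → Fin s → ℕ,
      (∀ i, Antitone (f i)) ∧
      (∀ i j, t i j ≤ f i j ∧ f i j ≤ d i j) ∧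
      Majorized (∑ i : Fin k, tupleMul (fun j => f i j - t i j)) (tupleMul A) ∧
      Majorized (∑ i : Fin k, tupleMul (fun j => d i j - f i j)) (tupleMul B) := by
  set Z := Finset.univ.val.map fun j => (A j, B j)
  have hZ : Z.map (fun p => p.1 + p.2) = tupleMul fun j => A j + B j := Multiset.map_map _ _ _
  rw [sum_tupleMul, ← hZ] at hmaj
  obtain ⟨x, hxd, hxA, hxB⟩ := exists_split_of_majorized _ Z hmaj
  have hZA : Z.map Prod.fst = tupleMul A := Multiset.map_map _ _ _
  have hZB : Z.map Prod.snd = tupleMul B := Multiset.map_map _ _ _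
  choose f hf htf hfd hfA hfB using fun i => exists_antitone_between (ht i) (hd i)
    (f := fun j => t i j + x (i, j)) (fun j => Nat.le_add_right _ _) fun j => by
      have : x (i, j) ≤ d i j - t i j := hxd (i, j)
      have := hdt i j
      show t i j + x (i, j) ≤ d i j
      omega
  refine ⟨f, hf, fun i j => ⟨htf i j, hfd i j⟩, (Majorized.sum _ fun i _ => hfA i).trans ?_,
    (Majorized.sum _ fun i _ => hfB i).trans ?_⟩
  · rw [← hZA]
    convert hxA using 1
    refine (sum_tupleMul fun i j => t i j + x (i, j) - t i j).trans (Multiset.map_congr rfl ?_)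
    simp
  · rw [← hZB]
    convert hxB using 1
    refine (sum_tupleMul fun i j => d i j - (t i j + x (i, j))).trans (Multiset.map_congr rfl ?_)
    simp [Nat.sub_add_eq]

theorem stmt0 (k s : ℕ) (hk : 0 < k) (hs : 0 < s)
    (d t : Fin k → Fin s → ℕ)
    (hd : ∀ i, Antitone (d i)) (ht : ∀ i, Antitone (t i))
    (hdt : ∀ i j, t i j ≤ d i j)
    (A B : Fin s → ℕ) (hA : Antitone A) (hB : Antitone B)
    (hmaj : Majorized (∑ i : Fin k, tupleMul (fun j => d i j - t i j))
            (tupleMul (fun j => A j + B j))) :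
    ∃ f : Fin k → Fin s → ℕ,
      (∀ i, Antitone (f i)) ∧
      (∀ i j, t i j ≤ f i j ∧ f i j ≤ d i j) ∧
      Majorized (∑ i : Fin k, tupleMul (fun j => f i j - t i j)) (tupleMul A) ∧
      Majorized (∑ i : Fin k, tupleMul (fun j => d i j - f i j)) (tupleMul B) :=
  stmt0_general k s d t hd ht hdt A B hmaj
end

section
/- Let F be an algebraically closed field, and let α̃ : α̃_1 | ⋯ | α̃_n and γ̃ : γ̃_1 | ⋯ | γ̃_{n+m+p} be divisibility chains of nonzero homogeneous polynomials in F[λ,μ] with γ̃_i | α̃_i | γ̃_{i+m+p} for i = 1,…,n. Let ψ_1,…,ψ_k be the distinct irreducible homogeneous factors of γ̃_{n+m+p} (each of degree 1, since F is algebraically closed), and write α̃_i = ψ_1^{a^1_{n+1−i}} ⋯ ψ_k^{a^k_{n+1−i}} for i = 1,…,n and γ̃_i = ψ_1^{g^1_{n+m+p+1−i}} ⋯ ψ_k^{g^k_{n+m+p+1−i}} for i = 1,…,n+m+p, so that a^i = (a^i_1,…,a^i_n) and g^i = (g^i_1,…,g^i_{n+m+p}) are partitions for each i = 1,…,k. Then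 the sequence of degrees (d(σ̃_{m+p}(α̃,γ̃)), …, d(σ̃_1(α̃,γ̃))) equals the componentwise sum of partitions conj(conj(g^1) − conj(a^1)) + ⋯ + conj(conj(g^k) − conj(a^k)), where conj denotes the dual (conjugate) partition. -/
noncomputable section

/-- The polynomial ring `F[λ,μ]`. -/
abbrev Poly2 (F : Type*) [Field F] := MvPolynomial (Fin 2) F

/-- `F[λ,μ]` is a UFD, hence carries a (noncomputable) GCD/LCM structure,
well defined up to scalars; degrees of lcm's are independent of this choice. -/
noncomputable instance (F : Type*) [Field F] : GCDMonoid (Poly2 F) :=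
  UniqueFactorizationMonoid.toGCDMonoid _

/-- Extension of a finite chain `δ̃_1 | ⋯ | δ̃_x` (0-indexed as `δ 0, …, δ (x-1)`)
to all integer indices, with the convention `δ̃_i = 1` for out-of-range `i`
(in particular for `i ≤ 0`). -/
def ext {F : Type*} [Field F] {x : ℕ} (δ : Fin x → Poly2 F) (j : ℤ) : Poly2 F :=
  if h : 1 ≤ j ∧ j ≤ x then δ ⟨(j - 1).toNat, by omega⟩ else 1

/-- `d(π̃_i(δ̃,ε̃)) = ∑_{j=1}^{x+i} d(lcm(δ̃_{j−i}, ε̃_j))`, the total degree of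
`π̃_i(δ̃,ε̃) = ∏_{j=1}^{x+i} lcm(δ̃_{j−i}, ε̃_j)`. -/
def piDeg {F : Type*} [Field F] {x z : ℕ} (δ : Fin x → Poly2 F) (ε : Fin z → Poly2 F)
    (i : ℕ) : ℕ :=
  ∑ j ∈ Finset.Icc 1 (x + i),
    (lcm (ext δ ((j : ℤ) - (i : ℤ))) (ext ε (j : ℤ))).totalDegree

/-- The `i`-th entry (1-indexed: `i ≥ 1`, passed here as `i - 1 : ℕ`) of the dual
(conjugate) partition of the partition given by the tuple `f`:
`conj f i = #{j : f_j ≥ i + 1}` counts (0-indexed `i`) the entries of `f` that are `≥ i+1`. -/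
def conjP {N : ℕ} (f : Fin N → ℕ) (i : ℕ) : ℕ :=
  (Finset.univ.filter (fun j => i + 1 ≤ f j)).card

/-!
Because the `ψ_l` are pairwise non-associated primes of degree one, `d(lcm(α̃_{j-i}, γ̃_j))` is
the sum over `l` of the larger of the two `ψ_l`-exponents, so `d(π̃_i)` splits into one sum per
prime. For a single prime, sum the exponents layer by layer: the indices `j ≤ n + i` whose
exponent in `α̃_{j-i}` exceeds `c` form a final segment of length `conj(a)_c`, and those whose
exponent in `γ̃_j` exceeds `c` a final segment of length `conj(g)_c - (m + p - i)`. Hence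
`d(π̃_i) = ∑_l ∑_c max(conj(a^l)_c, conj(g^l)_c - (m + p - i))`, and raising `i` by one raises
the `c`-th term by one exactly when `conj(g^l)_c - conj(a^l)_c ≥ m + p - i`; counting these `c`
is taking the conjugate of `conj(g^l) - conj(a^l)`.
-/
theorem associated_lcm_prod_pow {α ι : Type*} [CommMonoidWithZero α] [GCDMonoid α]
    [Fintype ι] {ψ : ι → α} (hψ : ∀ l, Irreducible (ψ l))
    (hdistinct : Pairwise fun l l' => ¬ Associated (ψ l) (ψ l')) (e f : ι → ℕ) :
    Associated (lcm (∏ l, ψ l ^ e l) (∏ l, ψ l ^ f l)) (∏ l, ψ l ^ max (e l) (f l)) := by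
  have hcoprime : Pairwise fun l l' =>
      IsRelPrime (ψ l ^ max (e l) (f l)) (ψ l' ^ max (e l') (f l')) := fun l l' hll' =>
    ((hψ l).isRelPrime_iff_not_dvd.mpr fun h =>
      hdistinct hll' ((hψ l).associated_of_dvd (hψ l') h)).pow
  refine associated_of_dvd_dvd ?_ (Fintype.prod_dvd_of_isRelPrime hcoprime fun l => ?_)
  · exact lcm_dvd (Finset.prod_dvd_prod_of_dvd _ _ fun l _ => pow_dvd_pow _ (le_max_left _ _))
      (Finset.prod_dvd_prod_of_dvd _ _ fun l _ => pow_dvd_pow _ (le_max_right _ _))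
  · rcases max_cases (e l) (f l) with ⟨h, _⟩ | ⟨h, _⟩ <;> rw [h]
    · exact (Finset.dvd_prod_of_mem (fun l => ψ l ^ e l) (Finset.mem_univ l)).trans
        (dvd_lcm_left _ _)
    · exact (Finset.dvd_prod_of_mem (fun l => ψ l ^ f l) (Finset.mem_univ l)).trans
        (dvd_lcm_right _ _)

namespace MvPolynomial

variable {σ R ι : Type*} [CommRing R] [IsDomain R] [Fintype ι]

theorem totalDegree_eq_of_associated {p q : MvPolynomial σ R} (h : Associated p q) :
    p.totalDegree = q.totalDegree := by
  rcases eq_or_ne q 0 with rfl | hq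
  · rw [(associated_zero_iff_eq_zero p).mp h]
  exact le_antisymm (totalDegree_le_of_dvd_of_isDomain h.dvd hq)
    (totalDegree_le_of_dvd_of_isDomain h.symm.dvd (h.ne_zero_iff.mpr hq))

theorem totalDegree_prod_pow_of_isHomogeneous_one {ψ : ι → MvPolynomial σ R}
    (hψ : ∀ l, (ψ l).IsHomogeneous 1) (hψ0 : ∀ l, ψ l ≠ 0) (c : ι → ℕ) :
    (∏ l, ψ l ^ c l).totalDegree = ∑ l, c l := by
  refine IsHomogeneous.totalDegree ?_
    (Finset.prod_ne_zero_iff.mpr fun l _ => pow_ne_zero _ (hψ0 l))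
  exact IsHomogeneous.prod _ _ _ fun l _ => by simpa using (hψ l).pow (c l)

theorem totalDegree_lcm_prod_pow [GCDMonoid (MvPolynomial σ R)] {ψ : ι → MvPolynomial σ R}
    (hirr : ∀ l, Irreducible (ψ l)) (hhom : ∀ l, (ψ l).IsHomogeneous 1)
    (hdistinct : Pairwise fun l l' => ¬ Associated (ψ l) (ψ l')) (e f : ι → ℕ) :
    (lcm (∏ l, ψ l ^ e l) (∏ l, ψ l ^ f l)).totalDegree = ∑ l, max (e l) (f l) := by
  rw [totalDegree_eq_of_associated (associated_lcm_prod_pow hirr hdistinct e f),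
    totalDegree_prod_pow_of_isHomogeneous_one hhom fun l => (hirr l).ne_zero]

end MvPolynomial

namespace Finset

theorem sum_eq_sum_range_card_filter_lt {ι : Type*} (s : Finset ι) {u : ι → ℕ} {C : ℕ}
    (hu : ∀ j ∈ s, u j ≤ C) : ∑ j ∈ s, u j = ∑ c ∈ range C, #{j ∈ s | c < u j} := by
  have hslice : ∀ j ∈ s, u j = #{c ∈ range C | c < u j} := fun j hj => by
    have := hu j hj
    rw [show {c ∈ range C | c < u j} = range (u j) from ?_, card_range]
    ext c
    simp only [mem_range, mem_filter]
    omega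
  simp only [sum_congr rfl hslice, card_filter]
  exact sum_comm

end Finset

/-- The exponent of `ψ` in `ext δ (j - i)` when `δ t = ψ ^ f t.rev`. -/
def shiftExp {x : ℕ} (f : Fin x → ℕ) (i j : ℕ) : ℕ :=
  if h : i + 1 ≤ j ∧ j ≤ x + i then f ⟨x + i - j, by omega⟩ else 0

theorem shiftExp_le {x : ℕ} {f : Fin x → ℕ} {C : ℕ} (hf : ∀ s, f s ≤ C) (i j : ℕ) :
    shiftExp f i j ≤ C := by
  unfold shiftExp
  split
  · exact hf _
  · exact C.zero_le

theorem ext_sub_eq_prod_pow {F : Type*} [Field F] {x k : ℕ} (ψ : Fin k → Poly2 F)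
    {δ : Fin x → Poly2 F} {e : Fin k → Fin x → ℕ}
    (hfac : ∀ t, δ t = ∏ l, ψ l ^ e l t.rev)
    (i j : ℕ) : ext δ ((j : ℤ) - i) = ∏ l, ψ l ^ shiftExp (e l) i j := by
  unfold ext shiftExp
  by_cases h : i + 1 ≤ j ∧ j ≤ x + i
  · rw [dif_pos (by omega), hfac]
    refine Finset.prod_congr rfl fun l _ => ?_
    rw [dif_pos h]
    congr 2
    ext
    rw [Fin.val_rev]
    show x - (((j : ℤ) - i - 1).toNat + 1) = x + i - j
    omega
  · rw [dif_neg (by omega)]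
    simp only [dif_neg h, pow_zero, Finset.prod_const_one]

theorem conjP_le {N : ℕ} (f : Fin N → ℕ) (c : ℕ) : conjP f c ≤ N :=
  (Finset.card_filter_le _ _).trans_eq (Finset.card_fin N)

theorem conjP_eq_zero {N : ℕ} {f : Fin N → ℕ} {c : ℕ} (h : ∀ s, f s ≤ c) :
    conjP f c = 0 := by
  rw [conjP, Finset.card_eq_zero, Finset.filter_eq_empty_iff]
  exact fun s _ => (h s).not_gt

theorem Antitone.lt_apply_iff_lt_conjP {N : ℕ} {f : Fin N → ℕ} (hf : Antitone f) (c : ℕ)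
    (s : Fin N) : c < f s ↔ (s : ℕ) < conjP f c := by
  constructor
  · intro hs
    calc (s : ℕ) < (Finset.Iic s).card := by rw [Fin.card_Iic]; omega
      _ ≤ conjP f c := Finset.card_le_card fun t ht =>
        Finset.mem_filter.mpr ⟨Finset.mem_univ t, hs.trans_le (hf (Finset.mem_Iic.mp ht))⟩
  · contrapose!
    intro hs
    calc conjP f c ≤ (Finset.Iio s).card := Finset.card_le_card fun t ht =>
          Finset.mem_Iio.mpr (lt_of_not_ge fun hst => ((hf hst).trans hs).not_gt
            (Finset.mem_filter.mp ht).2)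
      _ = s := Fin.card_Iio s

theorem lt_shiftExp_iff {x : ℕ} {f : Fin x → ℕ} (hf : Antitone f) {i j : ℕ} (c : ℕ)
    (hj : j ≤ x + i) : c < shiftExp f i j ↔ x + i - conjP f c < j := by
  have := conjP_le f c
  unfold shiftExp
  split
  · refine (hf.lt_apply_iff_lt_conjP c _).trans ?_
    show x + i - j < conjP f c ↔ _
    omega
  · omega

theorem sum_Icc_max_shiftExp {n y N : ℕ} (hN : N = n + y)
    {fα : Fin n → ℕ} {fγ : Fin N → ℕ}
    (hfα : Antitone fα) (hfγ : Antitone fγ) {i : ℕ} (hi : i ≤ y) {C : ℕ}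
    (hCα : ∀ s, fα s ≤ C) (hCγ : ∀ s, fγ s ≤ C) :
    ∑ j ∈ Finset.Icc 1 (n + i), max (shiftExp fα i j) (shiftExp fγ 0 j)
      = ∑ c ∈ Finset.range C, max (conjP fα c) (conjP fγ c - (y - i)) := by
  rw [Finset.sum_eq_sum_range_card_filter_lt _ fun j _ =>
    max_le (shiftExp_le hCα i j) (shiftExp_le hCγ 0 j)]
  refine Finset.sum_congr rfl fun c _ => ?_
  have := conjP_le fα c
  have := conjP_le fγ c
  have hlayer : {j ∈ Finset.Icc 1 (n + i) | c < max (shiftExp fα i j) (shiftExp fγ 0 j)}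
      = Finset.Icc (min (n + i - conjP fα c) (N - conjP fγ c) + 1) (n + i) := by
    ext j
    simp only [Finset.mem_filter, Finset.mem_Icc, lt_max_iff]
    constructor
    · rintro ⟨hj, hlt⟩
      rw [lt_shiftExp_iff hfα c hj.2, lt_shiftExp_iff hfγ c (by omega)] at hlt
      omega
    · intro hj
      refine ⟨⟨by omega, hj.2⟩, ?_⟩
      rw [lt_shiftExp_iff hfα c hj.2, lt_shiftExp_iff hfγ c (by omega)]
      omega
  rw [hlayer, Nat.card_Icc]
  omega

theorem piDeg_eq_sum_sum_max_conjP {F : Type*} [Field F] {n y N k : ℕ} (hN : N = n + y)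
    {ψ : Fin k → Poly2 F} (hirr : ∀ l, Irreducible (ψ l))
    (hhom : ∀ l, (ψ l).IsHomogeneous 1)
    (hdistinct : Pairwise fun l l' => ¬ Associated (ψ l) (ψ l'))
    {a : Fin k → Fin n → ℕ} {g : Fin k → Fin N → ℕ}
    (ha : ∀ l, Antitone (a l)) (hg : ∀ l, Antitone (g l))
    {α : Fin n → Poly2 F} {γ : Fin N → Poly2 F}
    (hαfac : ∀ t, α t = ∏ l, ψ l ^ a l t.rev)
    (hγfac : ∀ t, γ t = ∏ l, ψ l ^ g l t.rev)
    {C : ℕ} (hCa : ∀ l s, a l s ≤ C) (hCg : ∀ l s, g l s ≤ C) {i : ℕ} (hi : i ≤ y) :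
    piDeg α γ i
      = ∑ l, ∑ c ∈ Finset.range C, max (conjP (a l) c) (conjP (g l) c - (y - i)) := by
  have hlcm : ∀ j ∈ Finset.Icc 1 (n + i), (lcm (ext α ((j : ℤ) - i)) (ext γ j)).totalDegree
      = ∑ l, max (shiftExp (a l) i j) (shiftExp (g l) 0 j) := fun j _ => by
    rw [ext_sub_eq_prod_pow ψ hαfac, ← sub_zero (j : ℤ), ← Nat.cast_zero,
      ext_sub_eq_prod_pow ψ hγfac, MvPolynomial.totalDegree_lcm_prod_pow hirr hhom hdistinct]
  rw [piDeg, Finset.sum_congr rfl hlcm, Finset.sum_comm]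
  exact Finset.sum_congr rfl fun l _ =>
    sum_Icc_max_shiftExp hN (ha l) (hg l) hi (hCa l) (hCg l)

theorem sum_range_max_tsub_eq_add_ncard {A G : ℕ → ℕ} {C : ℕ}
    (hG : ∀ c, C ≤ c → G c = 0) (q : ℕ) :
    ∑ c ∈ Finset.range C, max (A c) (G c - q)
      = ∑ c ∈ Finset.range C, max (A c) (G c - (q + 1)) + {c | q + 1 ≤ G c - A c}.ncard := by
  have hset : {c | q + 1 ≤ G c - A c} = ↑{c ∈ Finset.range C | q + 1 ≤ G c - A c} := by
    ext c
    simp only [Set.mem_ofPred_eq, Finset.coe_filter, Finset.mem_range]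
    refine ⟨fun hc => ⟨?_, hc⟩, And.right⟩
    by_contra! hCc
    rw [hG c hCc] at hc
    omega
  rw [hset, Set.ncard_coe_finset, Finset.card_filter, ← Finset.sum_add_distrib]
  refine Finset.sum_congr rfl fun c _ => ?_
  split_ifs <;> omega

theorem stmt3 (F : Type*) [Field F] (n m p k : ℕ)
    (ψ : Fin k → Poly2 F)
    (hirr : ∀ l, Irreducible (ψ l))
    (hhom : ∀ l, (ψ l).IsHomogeneous 1)
    (hdistinct : ∀ l l', l ≠ l' → ¬ Associated (ψ l) (ψ l'))
    (a : Fin k → Fin n → ℕ) (g : Fin k → Fin (n + m + p) → ℕ)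
    (ha : ∀ l, Antitone (a l)) (hg : ∀ l, Antitone (g l))
    (α : Fin n → Poly2 F) (γ : Fin (n + m + p) → Poly2 F)
    -- `α̃_i = ψ_1^{a^1_{n+1−i}} ⋯ ψ_k^{a^k_{n+1−i}}` (0-indexed via `Fin.rev`)
    (hαfac : ∀ i : Fin n, α i = ∏ l, ψ l ^ a l i.rev)
    -- `γ̃_i = ψ_1^{g^1_{n+m+p+1−i}} ⋯ ψ_k^{g^k_{n+m+p+1−i}}` (0-indexed via `Fin.rev`)
    (hγfac : ∀ i : Fin (n + m + p), γ i = ∏ l, ψ l ^ g l i.rev) :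
    -- the sequence `(d(σ̃_{m+p}(α̃,γ̃)), …, d(σ̃_1(α̃,γ̃)))`, whose entry at (0-indexed)
    -- position `q` is `d(σ̃_{m+p−q}) = d(π̃_{m+p−q}) − d(π̃_{m+p−q−1})`, equals the
    -- componentwise sum `conj(conj g^1 − conj a^1) + ⋯ + conj(conj g^k − conj a^k)`
    ∀ q : Fin (m + p),
      piDeg α γ (m + p - q) - piDeg α γ (m + p - q - 1)
        = ∑ l, {j : ℕ | (q : ℕ) + 1 ≤ conjP (g l) j - conjP (a l) j}.ncard := by
  intro q
  obtain ⟨Ca, hCa⟩ := Finite.exists_le fun x : Fin k × Fin n => a x.1 x.2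
  obtain ⟨Cg, hCg⟩ := Finite.exists_le fun x : Fin k × Fin (n + m + p) => g x.1 x.2
  have hpiDeg (i : ℕ) (hi : i ≤ m + p) := piDeg_eq_sum_sum_max_conjP (Nat.add_assoc n m p)
    hirr hhom (fun l l' => hdistinct l l') ha hg hαfac hγfac (C := max Ca Cg)
    (fun l s => le_max_of_le_left (hCa (l, s))) (fun l s => le_max_of_le_right (hCg (l, s))) hi
  have hgC (l) (c) (hc : max Ca Cg ≤ c) : conjP (g l) c = 0 :=
    conjP_eq_zero fun s => (hCg (l, s)).trans (le_of_max_le_right hc)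
  have hq : (q : ℕ) < m + p := q.isLt
  rw [hpiDeg _ (Nat.sub_le _ _), hpiDeg _ (by omega), Nat.sub_sub_self hq.le,
    show m + p - (m + p - q - 1) = q + 1 by omega,
    Finset.sum_congr rfl fun l _ => sum_range_max_tsub_eq_add_ncard (hgC l) q,
    Finset.sum_add_distrib]
  omega

end
end

section
/- The analogue of the completion lemma with a factor 2 fails: there exist partitions d = (d_1, d_2), t = (t_1, t_2), A = (1,1), B = (1,1) of nonnegative integers with d_i ≥ t_i for i = 1, 2, such that the partition 2·(d − t) is majorized by A + B = (2,2), yet there is no pair of nonnegative integers f = (f_1, f_2) with f_1 ≥ f_2 satisfying d_i ≥ f_i ≥ t_i for i = 1, 2, (2(f_1 − t_1), 2(f_2 − t_2)) ≺ (1,1), and (2(d_1 − f_1), 2(d_2 − f_2)) ≺ (1,1). Concretely, this holds for any partition t = (t_1, t_2) and d = (t_1 + 1, t_2 + 1). -/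
lemma mem_le_kMaxSum {a : ℕ} {M : Multiset ℕ} (ha : a ∈ M) : a ≤ kMaxSum M 1 := by
  apply Multiset.le_sup
  apply Multiset.mem_map.2
  refine ⟨{a}, ?_, rfl⟩
  simp [Multiset.mem_filter, Multiset.mem_powerset, Multiset.singleton_le.2 ha]

lemma kMaxSum_pair_one (a b : ℕ) : kMaxSum ({a, b} : Multiset ℕ) 1 = max a b := by
  apply le_antisymm
  · unfold kMaxSum
    refine Multiset.sup_le.2 ?_
    intro x hx
    obtain ⟨T, hT, rfl⟩ := Multiset.mem_map.1 hx
    rw [Multiset.mem_filter, Multiset.mem_powerset] at hT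
    obtain ⟨hle, hcard⟩ := hT
    interval_cases hc : (Multiset.card T)
    · rw [Multiset.card_eq_zero.1 hc]; simp
    · obtain ⟨x, rfl⟩ := Multiset.card_eq_one.1 hc
      have := Multiset.singleton_le.1 hle
      simp only [Multiset.insert_eq_cons, Multiset.mem_cons, Multiset.mem_singleton] at this
      rcases this with rfl | rfl <;> simp
  · exact max_le (mem_le_kMaxSum (by simp)) (mem_le_kMaxSum (by simp))

/-- The analogue of the completion lemma with a factor `2` fails: with
`A = (1,1)`, `B = (1,1)`, for any partition `t = (t₁,t₂)` and `d = (t₁+1, t₂+1)`,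
the hypothesis `2(d − t) ≺ A + B = (2,2)` holds, yet there is no partition
`f = (f₁,f₂)` with `tᵢ ≤ fᵢ ≤ dᵢ`, `(2(f₁−t₁), 2(f₂−t₂)) ≺ (1,1)`, and
`(2(d₁−f₁), 2(d₂−f₂)) ≺ (1,1)`. -/
theorem stmt5 (t1 t2 : ℕ) (h : t2 ≤ t1) :
    Majorized ({2 * ((t1 + 1) - t1), 2 * ((t2 + 1) - t2)} : Multiset ℕ)
      ({1 + 1, 1 + 1} : Multiset ℕ) ∧
    ¬ ∃ f1 f2 : ℕ, f2 ≤ f1 ∧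
      (t1 ≤ f1 ∧ f1 ≤ t1 + 1) ∧ (t2 ≤ f2 ∧ f2 ≤ t2 + 1) ∧
      Majorized ({2 * (f1 - t1), 2 * (f2 - t2)} : Multiset ℕ) ({1, 1} : Multiset ℕ) ∧
      Majorized ({2 * ((t1 + 1) - f1), 2 * ((t2 + 1) - f2)} : Multiset ℕ)
        ({1, 1} : Multiset ℕ) := by
  constructor
  · have e1 : t1 + 1 - t1 = 1 := by omega
    have e2 : t2 + 1 - t2 = 1 := by omega
    rw [e1, e2]
    exact ⟨rfl, fun j => le_refl _⟩
  · rintro ⟨f1, f2, hle, ⟨h1, h1'⟩, ⟨h2, h2'⟩, ⟨hsum, hmaj⟩, _⟩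
    have hb := (hmaj 1).trans_eq (kMaxSum_pair_one 1 1)
    rw [kMaxSum_pair_one] at hb
    have ha : 2 * (f1 - t1) ≤ 1 := (le_max_left _ _).trans hb
    have hb' : 2 * (f2 - t2) ≤ 1 := (le_max_right _ _).trans hb
    simp only [Multiset.insert_eq_cons, Multiset.sum_cons, Multiset.sum_singleton] at hsum
    omega
end
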